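/- For every n×n skew-symmetrizable integer matrix B and every finite sequence w of indices in {1,…,n}, one has G^B(w) · B^B(w) = B · C^B(w). -/
import Mathlib


open Matrix

/-- Entrywise positive part `[B]₊`. -/
def matPos {n : ℕ} (B : Matrix (Fin n) (Fin n) ℤ) : Matrix (Fin n) (Fin n) ℤ :=
  fun i j => max (B i j) 0

/-- `B^{k•}` : the matrix `B` with all entries outside row `k` set to zero. -/
def rowR {n : ℕ} (B : Matrix (Fin n) (Fin n) ℤ) (k : Fin n) : Matrix (Fin n) (Fin n) ℤ :=
  fun i j => if i = k then B i j else 0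

/-- `B^{•k}` : the matrix `B` with all entries outside column `k` set to zero. -/
def colR {n : ℕ} (B : Matrix (Fin n) (Fin n) ℤ) (k : Fin n) : Matrix (Fin n) (Fin n) ℤ :=
  fun i j => if j = k then B i j else 0

/-- `J_k` : the identity matrix with its `(k,k)` entry replaced by `-1`. -/
def Jmat (n : ℕ) (k : Fin n) : Matrix (Fin n) (Fin n) ℤ :=
  Matrix.diagonal (fun i => if i = k then -1 else 1)

/-- Matrix mutation `μ_k(B)`. -/
def mutB {n : ℕ} (B : Matrix (Fin n) (Fin n) ℤ) (k : Fin n) : Matrix (Fin n) (Fin n) ℤ :=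
  fun i j =>
    if i = k ∨ j = k then -B i j
    else B i j + max (B i k) 0 * max (B k j) 0 - max (-B i k) 0 * max (-B k j) 0

/-- Mutation of the `C`-matrix in direction `l`, where `B` is the current exchange matrix. -/
def mutC {n : ℕ} (B C : Matrix (Fin n) (Fin n) ℤ) (l : Fin n) : Matrix (Fin n) (Fin n) ℤ :=
  fun i j =>
    if j = l then -C i j
    else C i j + max (C i l) 0 * max (B l j) 0 - max (-C i l) 0 * max (-B l j) 0

/-- One step of the simultaneous `(B, C, G)` recursion with initial exchange matrix `B0`. -/
def BCGstep {n : ℕ} (B0 : Matrix (Fin n) (Fin n) ℤ)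
    (p : Matrix (Fin n) (Fin n) ℤ × Matrix (Fin n) (Fin n) ℤ × Matrix (Fin n) (Fin n) ℤ)
    (l : Fin n) :
    Matrix (Fin n) (Fin n) ℤ × Matrix (Fin n) (Fin n) ℤ × Matrix (Fin n) (Fin n) ℤ :=
  (mutB p.1 l, mutC p.1 p.2.1 l,
    p.2.2 * (Jmat n l + colR (matPos p.1) l) - B0 * colR (matPos p.2.1) l)

/-- The triple `(B_m, C_m, G_m)` obtained from `(B0, I, I)` by mutating along the word `w`. -/
def BCG {n : ℕ} (B0 : Matrix (Fin n) (Fin n) ℤ) (w : List (Fin n)) :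
    Matrix (Fin n) (Fin n) ℤ × Matrix (Fin n) (Fin n) ℤ × Matrix (Fin n) (Fin n) ℤ :=
  w.foldl (BCGstep B0) (B0, 1, 1)

/-- `B^B(w)` : the exchange matrix at the end of the word `w`. -/
def Bmat {n : ℕ} (B0 : Matrix (Fin n) (Fin n) ℤ) (w : List (Fin n)) : Matrix (Fin n) (Fin n) ℤ :=
  (BCG B0 w).1

/-- `C^B(w)` : the matrix of c-vectors at the end of the word `w`. -/
def Cmat {n : ℕ} (B0 : Matrix (Fin n) (Fin n) ℤ) (w : List (Fin n)) : Matrix (Fin n) (Fin n) ℤ :=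
  (BCG B0 w).2.1

/-- `G^B(w)` : the matrix of g-vectors at the end of the word `w`. -/
def Gmat {n : ℕ} (B0 : Matrix (Fin n) (Fin n) ℤ) (w : List (Fin n)) : Matrix (Fin n) (Fin n) ℤ :=
  (BCG B0 w).2.2

/-- `B` is skew-symmetrized by the diagonal matrix with (positive) diagonal entries `d`,
i.e. `Bᵀ = -D B D⁻¹`, stated integrally as `Bᵀ D = -(D B)`. -/
def SkewSymmBy {n : ℕ} (B : Matrix (Fin n) (Fin n) ℤ) (d : Fin n → ℤ) : Prop :=
  (∀ i, 0 < d i) ∧ Bᵀ * Matrix.diagonal d = -(Matrix.diagonal d * B)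

/-- `B` is skew-symmetrizable. -/
def SkewSymmetrizable {n : ℕ} (B : Matrix (Fin n) (Fin n) ℤ) : Prop :=
  ∃ d : Fin n → ℤ, SkewSymmBy B d

/-- Every column of `C` has all entries nonnegative or all entries nonpositive. -/
def SignCoherent {n : ℕ} (C : Matrix (Fin n) (Fin n) ℤ) : Prop :=
  ∀ j, (∀ i, 0 ≤ C i j) ∨ (∀ i, C i j ≤ 0)

/-- The global sign-coherence hypothesis in rank `n`: all C-matrices of all cluster patterns
of rank `n` are sign-coherent. -/
def GlobalSC (n : ℕ) : Prop :=
  ∀ B' : Matrix (Fin n) (Fin n) ℤ, SkewSymmetrizable B' →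
    ∀ w' : List (Fin n), SignCoherent (Cmat B' w')

/-- The sign `ε_j(C)` of the `j`-th column of a sign-coherent matrix `C`:
`-1` if column `j` contains a negative entry, `1` otherwise. -/
def epsCol {n : ℕ} (C : Matrix (Fin n) (Fin n) ℤ) (j : Fin n) : ℤ :=
  if ∃ i, C i j < 0 then -1 else 1


section Aux

open Matrix

variable {n : ℕ}

lemma pos_part (a : ℤ) : max a 0 - max (-a) 0 = a := by
  rcases le_total a 0 with h | h
  · rw [max_eq_right h, max_eq_left (neg_nonneg.mpr h)]; ring
  · rw [max_eq_left h, max_eq_right (neg_nonpos.mpr h)]; ring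

lemma max0_nonpos {a : ℤ} (h : a ≤ 0) : max a 0 = 0 := max_eq_right h

lemma max0_nonneg {a : ℤ} (h : 0 ≤ a) : max a 0 = a := max_eq_left h

lemma key_arith (a b x : ℤ) :
    x + max a 0 * max b 0 - max (-a) 0 * max (-b) 0
      = (x + max (-a) 0 * b) + a * max b 0 := by
  rcases le_total a 0 with h1 | h1 <;> rcases le_total b 0 with h2 | h2
  · rw [max0_nonpos h1, max0_nonpos h2, max0_nonneg (neg_nonneg.mpr h1),
      max0_nonneg (neg_nonneg.mpr h2)]; ring
  · rw [max0_nonpos h1, max0_nonneg h2, max0_nonneg (neg_nonneg.mpr h1),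
      max0_nonpos (neg_nonpos.mpr h2)]; ring
  · rw [max0_nonneg h1, max0_nonpos h2, max0_nonpos (neg_nonpos.mpr h1),
      max0_nonneg (neg_nonneg.mpr h2)]; ring
  · rw [max0_nonneg h1, max0_nonneg h2, max0_nonpos (neg_nonpos.mpr h1),
      max0_nonpos (neg_nonpos.mpr h2)]; ring

lemma mul_colR (A X : Matrix (Fin n) (Fin n) ℤ) (l : Fin n) :
    A * colR X l = colR (A * X) l := by
  ext i j
  by_cases h : j = l <;> simp [colR, mul_apply, h]

lemma colR_mul_apply (X A : Matrix (Fin n) (Fin n) ℤ) (l : Fin n) (i j : Fin n) :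
    (colR X l * A) i j = X i l * A l j := by
  simp [colR, mul_apply, ite_mul, zero_mul]

lemma mul_rowR_apply (A X : Matrix (Fin n) (Fin n) ℤ) (l : Fin n) (i j : Fin n) :
    (A * rowR X l) i j = A i l * X l j := by
  simp [rowR, mul_apply, mul_ite, mul_zero]

lemma Jmat_mul_apply (A : Matrix (Fin n) (Fin n) ℤ) (l : Fin n) (i j : Fin n) :
    (Jmat n l * A) i j = (if i = l then -1 else 1) * A i j := by
  simp [Jmat, Matrix.diagonal_mul]

lemma mul_Jmat_apply (A : Matrix (Fin n) (Fin n) ℤ) (l : Fin n) (i j : Fin n) :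
    (A * Jmat n l) i j = A i j * (if j = l then -1 else 1) := by
  simp [Jmat, Matrix.mul_diagonal]

lemma matPos_ll {B' : Matrix (Fin n) (Fin n) ℤ} {l : Fin n} (h0 : B' l l = 0) :
    matPos (-B') l l = 0 := by simp [matPos, h0]

lemma mutB_factor (B' : Matrix (Fin n) (Fin n) ℤ) (l : Fin n) (h0 : B' l l = 0) :
    mutB B' l = (Jmat n l + colR (matPos (-B')) l) * B'
      * (Jmat n l + rowR (matPos B') l) := by
  funext i j
  have hM : ∀ a b : Fin n, ((Jmat n l + colR (matPos (-B')) l) * B') a b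
      = (if a = l then -1 else 1) * B' a b + max (-(B' a l)) 0 * B' l b := by
    intro a b
    rw [Matrix.add_mul, Matrix.add_apply, Jmat_mul_apply, colR_mul_apply]
    simp [matPos]
  rw [Matrix.mul_add, Matrix.add_apply, mul_Jmat_apply, mul_rowR_apply, hM, hM]
  simp only [matPos, Matrix.neg_apply]
  by_cases hi : i = l <;> by_cases hj : j = l <;>
    simp only [mutB, hi, hj, if_pos rfl, if_neg, ite_true, ite_false, h0] <;>
    simp [hi, hj, h0, max0_nonpos] <;> try ring
  · -- i ≠ l, j ≠ l
    have := key_arith (B' i l) (B' l j) (B' i j)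
    -- goal shape
    push_neg at *
    linarith [key_arith (B' i l) (B' l j) (B' i j)]

lemma mutC_eq (B' C : Matrix (Fin n) (Fin n) ℤ) (l : Fin n) (h0 : B' l l = 0) :
    mutC B' C l = C * (Jmat n l + rowR (matPos B') l) + colR (matPos (-C)) l * B' := by
  funext i j
  rw [Matrix.add_apply, Matrix.mul_add, Matrix.add_apply, mul_Jmat_apply,
    mul_rowR_apply, colR_mul_apply]
  simp only [matPos, Matrix.neg_apply]
  by_cases hj : j = l
  · simp [mutC, hj, h0]
  · simp only [mutC, hj, ite_false, if_neg hj]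
    linarith [key_arith (C i l) (B' l j) (C i j)]

lemma Jmat_mul_Jmat (l : Fin n) : Jmat n l * Jmat n l = 1 := by
  rw [Jmat, Matrix.diagonal_mul_diagonal]
  ext i j
  by_cases hi : i = l <;> simp [Matrix.diagonal_apply, Matrix.one_apply, hi]

lemma Jmat_mul_colR (Z : Matrix (Fin n) (Fin n) ℤ) (l : Fin n) (hz : Z l l = 0) :
    Jmat n l * colR Z l = colR Z l := by
  ext i j
  rw [Jmat_mul_apply]
  by_cases hi : i = l <;> by_cases hj : j = l <;> simp [colR, hi, hj, hz]

lemma colR_mul_Jmat (Y : Matrix (Fin n) (Fin n) ℤ) (l : Fin n) :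
    colR Y l * Jmat n l = -(colR Y l) := by
  ext i j
  rw [mul_Jmat_apply]
  by_cases hj : j = l <;> simp [colR, hj]

lemma colR_mul_colR (Y Z : Matrix (Fin n) (Fin n) ℤ) (l : Fin n) (hz : Z l l = 0) :
    colR Y l * colR Z l = 0 := by
  ext i j
  rw [colR_mul_apply]
  by_cases hj : j = l <;> simp [colR, hj, hz]

lemma JE_JE' (B' : Matrix (Fin n) (Fin n) ℤ) (l : Fin n) (h0 : B' l l = 0) :
    (Jmat n l + colR (matPos B') l) * (Jmat n l + colR (matPos (-B')) l)
      = 1 - colR B' l := by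
  rw [Matrix.add_mul, Matrix.mul_add, Matrix.mul_add, Jmat_mul_Jmat,
    Jmat_mul_colR _ _ (matPos_ll h0), colR_mul_Jmat,
    colR_mul_colR _ _ _ (matPos_ll h0)]
  ext i j
  by_cases hj : j = l <;> simp [colR, matPos, hj]
  linarith [pos_part (B' i l)]

lemma colR_JE' (Y Z : Matrix (Fin n) (Fin n) ℤ) (l : Fin n) (hz : Z l l = 0) :
    colR Y l * (Jmat n l + colR Z l) = -(colR Y l) := by
  rw [Matrix.mul_add, colR_mul_Jmat, colR_mul_colR _ _ _ hz, add_zero]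

lemma colR_mul_JF (Y Z B' : Matrix (Fin n) (Fin n) ℤ) (l : Fin n) (h0 : B' l l = 0) :
    (colR Y l * B') * (Jmat n l + rowR Z l) = colR Y l * B' := by
  ext i j
  rw [Matrix.mul_add, Matrix.add_apply, mul_Jmat_apply, mul_rowR_apply,
    colR_mul_apply, colR_mul_apply]
  by_cases hj : j = l <;> simp [hj, h0]

lemma colR_matPos_sub (C : Matrix (Fin n) (Fin n) ℤ) (l : Fin n) :
    colR (matPos C) l - colR C l = colR (matPos (-C)) l := by
  ext i j
  by_cases hj : j = l <;> simp [colR, matPos, hj]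
  linarith [pos_part (C i l)]

lemma step (B B' C G : Matrix (Fin n) (Fin n) ℤ) (l : Fin n)
    (h0 : B' l l = 0) (hGB : G * B' = B * C) :
    (G * (Jmat n l + colR (matPos B') l) - B * colR (matPos C) l) * mutB B' l
      = B * mutC B' C l := by
  rw [mutB_factor B' l h0, mutC_eq B' C l h0]
  have h1 : (G * (Jmat n l + colR (matPos B') l) - B * colR (matPos C) l)
      * (Jmat n l + colR (matPos (-B')) l)
      = G + B * colR (matPos (-C)) l := by
    rw [Matrix.sub_mul, Matrix.mul_assoc G, JE_JE' B' l h0,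
      Matrix.mul_assoc B, colR_JE' _ _ _ (matPos_ll h0),
      Matrix.mul_sub, Matrix.mul_one, mul_colR, hGB, ← mul_colR,
      Matrix.mul_neg, sub_neg_eq_add]
    have h2 : B * colR (matPos C) l - B * colR C l = B * colR (matPos (-C)) l := by
      rw [← Matrix.mul_sub, colR_matPos_sub]
    rw [← h2]; abel
  rw [← Matrix.mul_assoc, ← Matrix.mul_assoc, h1, Matrix.add_mul, Matrix.add_mul,
    hGB, Matrix.mul_assoc B (colR (matPos (-C)) l) B',
    Matrix.mul_assoc B (colR (matPos (-C)) l * B') (Jmat n l + rowR (matPos B') l),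
    colR_mul_JF _ _ _ _ h0, Matrix.mul_assoc B C (Jmat n l + rowR (matPos B') l),
    Matrix.mul_add]
  rw [← Matrix.mul_add]

lemma mul_max0 {c : ℤ} (hc : 0 ≤ c) (a : ℤ) : c * max a 0 = max (c * a) 0 := by
  rcases le_total a 0 with h | h
  · rw [max0_nonpos h, max0_nonpos (mul_nonpos_of_nonneg_of_nonpos hc h), mul_zero]
  · rw [max0_nonneg h, max0_nonneg (mul_nonneg hc h)]

lemma skew_apply {B' : Matrix (Fin n) (Fin n) ℤ} {d : Fin n → ℤ}
    (h : SkewSymmBy B' d) (i j : Fin n) : B' j i * d j = -(d i * B' i j) := by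
  have h2 := h.2
  rw [← Matrix.ext_iff] at h2
  have := h2 i j
  simpa [Matrix.mul_diagonal, Matrix.diagonal_mul, Matrix.transpose_apply] using this

lemma skew_diag_zero {B' : Matrix (Fin n) (Fin n) ℤ} {d : Fin n → ℤ}
    (h : SkewSymmBy B' d) (i : Fin n) : B' i i = 0 := by
  have h1 := skew_apply h i i
  have h2 : d i * B' i i = 0 := by linarith
  rcases mul_eq_zero.mp h2 with h3 | h3
  · exact absurd h3 (by have := h.1 i; omega)
  · exact h3

lemma mutB_skew {B' : Matrix (Fin n) (Fin n) ℤ} {d : Fin n → ℤ}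
    (h : SkewSymmBy B' d) (l : Fin n) : SkewSymmBy (mutB B' l) d := by
  have hd := h.1
  have hs := skew_apply h
  refine ⟨hd, ?_⟩
  rw [← Matrix.ext_iff]
  intro i j
  simp only [Matrix.mul_diagonal, Matrix.diagonal_mul, Matrix.transpose_apply,
    Matrix.neg_apply]
  by_cases hc : i = l ∨ j = l
  · have hc' : j = l ∨ i = l := hc.symm
    simp only [mutB, if_pos hc, if_pos hc']
    linarith [hs i j]
  · push_neg at hc
    have hc' : ¬(j = l ∨ i = l) := by tauto
    have hc'' : ¬(i = l ∨ j = l) := by tauto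
    simp only [mutB, if_neg hc', if_neg hc'']
    have e1 : d j * max (B' j l) 0 = d l * max (-(B' l j)) 0 := by
      rw [mul_max0 (le_of_lt (hd j)), mul_max0 (le_of_lt (hd l))]
      congr 1; linarith [hs l j]
    have e2 : d j * max (-(B' j l)) 0 = d l * max (B' l j) 0 := by
      rw [mul_max0 (le_of_lt (hd j)), mul_max0 (le_of_lt (hd l))]
      congr 1; linarith [hs l j]
    have e3 : d i * max (B' i l) 0 = d l * max (-(B' l i)) 0 := by
      rw [mul_max0 (le_of_lt (hd i)), mul_max0 (le_of_lt (hd l))]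
      congr 1; linarith [hs l i]
    have e4 : d i * max (-(B' i l)) 0 = d l * max (B' l i) 0 := by
      rw [mul_max0 (le_of_lt (hd i)), mul_max0 (le_of_lt (hd l))]
      congr 1; linarith [hs l i]
    linear_combination hs i j + (max (B' l i) 0) * e1 - (max (-(B' l i)) 0) * e2
      + (max (B' l j) 0) * e3 - (max (-(B' l j)) 0) * e4

lemma invariant (B : Matrix (Fin n) (Fin n) ℤ) (d : Fin n → ℤ) (w : List (Fin n)) :
    ∀ B' C G : Matrix (Fin n) (Fin n) ℤ, SkewSymmBy B' d → G * B' = B * C →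
      SkewSymmBy (w.foldl (BCGstep B) (B', C, G)).1 d ∧
      (w.foldl (BCGstep B) (B', C, G)).2.2 * (w.foldl (BCGstep B) (B', C, G)).1
        = B * (w.foldl (BCGstep B) (B', C, G)).2.1 := by
  induction w with
  | nil => exact fun B' C G h1 h2 => ⟨h1, h2⟩
  | cons l t ih =>
    intro B' C G h1 h2
    simp only [List.foldl_cons]
    exact ih _ _ _ (mutB_skew h1 l) (step B B' C G l (skew_diag_zero h1 l) h2)

end Aux


/-- for every skew-symmetrizable `B` and word `w`,
`G^B(w) · B^B(w) = B · C^B(w)`. -/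
theorem Gmat_mul_Bmat_eq_B_mul_Cmat {n : ℕ} (B : Matrix (Fin n) (Fin n) ℤ)
    (hB : SkewSymmetrizable B) (w : List (Fin n)) :
    Gmat B w * Bmat B w = B * Cmat B w := by
  obtain ⟨d, hd⟩ := hB
  exact (invariant B d w B 1 1 hd (by rw [one_mul, mul_one])).2
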